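/- arXiv:1005.1634 — 9 statements merged into one kernel-verified Lean document; each statement's English description precedes it below -/
import Mathlib

section
/- Let Γ_1 be a B×α matrix, Γ_2 a B×(k-1) matrix, and Γ_3 a B×α matrix over F_q, where B = kα, with all three matrices partitioned into k blocks of α rows each. Suppose: (i) the first block of Γ_1 is I_α and all other blocks of Γ_1 are zero; (ii) the first block of Γ_2 is zero; (iii) colspace(Γ_1) ⊆ colspace([Γ_2 | Γ_3]); and (iv) the first block of Γ_3 has rank α. Then colspace([Γ_1 | Γ_2]) = colspace([Γ_2 | Γ_3]). -/
/-!
Since the columns of `Γ₁` lie in the column space of `[Γ₂ | Γ₃]`, we have `Γ₁ = Γ₂ X + Γ₃ Y`.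
On the first block of rows this reads `I = Γ₃⁰ Y`, because `Γ₂` vanishes there, so `Y` is
invertible. Then `Γ₃ = (Γ₁ - Γ₂ X) Y⁻¹`, and `colspace Γ₁ + colspace Γ₂` and
`colspace Γ₂ + colspace Γ₃` contain each other.
-/

namespace Matrix

variable {R m n n₁ n₂ p : Type*} [Fintype n] [Fintype n₁] [Fintype n₂] [Fintype p]

section CommSemiring

variable [CommSemiring R]

theorem range_mulVecLin_fromCols (A : Matrix m n₁ R) (B : Matrix m n₂ R) :
    LinearMap.range (fromCols A B).mulVecLin =
      LinearMap.range A.mulVecLin ⊔ LinearMap.range B.mulVecLin := by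
  simp only [range_mulVecLin, ← Submodule.span_union, ← Set.Sum.elim_range]
  congr 2
  funext j
  cases j <;> rfl

theorem range_mulVecLin_mul_le (M : Matrix m n R) (N : Matrix n p R) :
    LinearMap.range (M * N).mulVecLin ≤ LinearMap.range M.mulVecLin := by
  rw [mulVecLin_mul]
  exact LinearMap.range_comp_le_range _ _

theorem range_mulVecLin_add_le (M N : Matrix m n R) :
    LinearMap.range (M + N).mulVecLin ≤
      LinearMap.range M.mulVecLin ⊔ LinearMap.range N.mulVecLin := by
  rw [mulVecLin_add]
  exact LinearMap.range_add_le _ _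

theorem range_mulVecLin_mul_of_isUnit [DecidableEq p] (M : Matrix m p R) {N : Matrix p p R}
    (hN : IsUnit N) : LinearMap.range (M * N).mulVecLin = LinearMap.range M.mulVecLin := by
  obtain ⟨N', hN'⟩ := hN.exists_right_inv
  refine (range_mulVecLin_mul_le M N).antisymm ?_
  simpa only [Matrix.mul_assoc, hN', Matrix.mul_one] using range_mulVecLin_mul_le (M * N) N'

theorem exists_mul_eq_of_range_mulVecLin_le {A : Matrix m p R} {M : Matrix m n R}
    (h : LinearMap.range A.mulVecLin ≤ LinearMap.range M.mulVecLin) :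
    ∃ W : Matrix n p R, M * W = A := by
  classical
  choose w hw using fun j => h ⟨Pi.single j 1, mulVec_single_one A j⟩
  refine ⟨(of w)ᵀ, ext fun i j => ?_⟩
  exact congrFun (hw j) i

theorem isUnit_of_eq_mul_add_mul_of_submatrix [DecidableEq p] {A : Matrix m p R}
    {B : Matrix m n R} {C : Matrix m p R} {X : Matrix n p R} {Y : Matrix p p R}
    (hA : A = B * X + C * Y) (r : p → m) (hA₀ : A.submatrix r id = 1)
    (hB₀ : B.submatrix r id = 0) : IsUnit Y := by
  have hC₀Y : C.submatrix r id * Y = 1 := by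
    have h₀ : (B * X + C * Y).submatrix r id = B.submatrix r id * X + C.submatrix r id * Y := rfl
    rwa [← hA, hA₀, hB₀, Matrix.zero_mul, zero_add, eq_comm] at h₀
  exact IsUnit.of_mul_eq_one_right _ hC₀Y

end CommSemiring

theorem range_mulVecLin_fromCols_eq_of_eq_mul_add_mul [CommRing R] [DecidableEq p]
    {A : Matrix m p R} {B : Matrix m n R} {C : Matrix m p R} {X : Matrix n p R} {Y : Matrix p p R}
    (hA : A = B * X + C * Y) (hY : IsUnit Y) :
    LinearMap.range (fromCols A B).mulVecLin = LinearMap.range (fromCols B C).mulVecLin := by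
  have hCY : C * Y = A + B * -X := by rw [hA, Matrix.mul_neg]; abel
  rw [range_mulVecLin_fromCols, range_mulVecLin_fromCols]
  apply le_antisymm
  · refine sup_le ?_ le_sup_left
    rw [hA]
    exact (range_mulVecLin_add_le _ _).trans
      (sup_le_sup (range_mulVecLin_mul_le _ _) (range_mulVecLin_mul_le _ _))
  · refine sup_le le_sup_right ?_
    rw [← range_mulVecLin_mul_of_isUnit C hY, hCY]
    exact (range_mulVecLin_add_le _ _).trans (sup_le_sup_left (range_mulVecLin_mul_le _ _) _)

end Matrix

open Matrix in
theorem interference_alignment_colspace_eq_general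
    {F : Type*} [Field F] {k α : ℕ} (hk : 0 < k)
    (Γ₁ : Matrix (Fin k × Fin α) (Fin α) F)
    (Γ₂ : Matrix (Fin k × Fin α) (Fin (k - 1)) F)
    (Γ₃ : Matrix (Fin k × Fin α) (Fin α) F)
    (h1 : ∀ i a j, Γ₁ (i, a) j = if i = (⟨0, hk⟩ : Fin k) ∧ a = j then 1 else 0)
    (h2 : ∀ a j, Γ₂ ((⟨0, hk⟩ : Fin k), a) j = 0)
    (h3 : Submodule.span F (Set.range fun j => fun i => Γ₁ i j) ≤
          Submodule.span F (Set.range fun j => fun i => (Matrix.fromCols Γ₂ Γ₃) i j)) :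
    Submodule.span F (Set.range fun j => fun i => (Matrix.fromCols Γ₁ Γ₂) i j) =
      Submodule.span F (Set.range fun j => fun i => (Matrix.fromCols Γ₂ Γ₃) i j) := by
  change Submodule.span F (Set.range Γ₁.col) ≤ Submodule.span F (Set.range (fromCols Γ₂ Γ₃).col)
    at h3
  change Submodule.span F (Set.range (fromCols Γ₁ Γ₂).col) =
    Submodule.span F (Set.range (fromCols Γ₂ Γ₃).col)
  rw [← range_mulVecLin, ← range_mulVecLin] at h3 ⊢
  obtain ⟨W, hW⟩ := exists_mul_eq_of_range_mulVecLin_le h3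
  rw [← fromRows_toRows W, fromCols_mul_fromRows] at hW
  have hY : IsUnit W.toRows₂ := by
    refine isUnit_of_eq_mul_add_mul_of_submatrix hW.symm (fun a => (⟨0, hk⟩, a)) ?_ ?_ <;>
      ext a b <;> simp [h1, h2, one_apply]
  exact range_mulVecLin_fromCols_eq_of_eq_mul_add_mul hW.symm hY

/-- Rank argument for interference alignment:
`colspace [Γ₁ | Γ₂] = colspace [Γ₂ | Γ₃]`. -/
theorem interference_alignment_colspace_eq
    {F : Type*} [Field F] [Fintype F] {k α : ℕ} (hk : 0 < k)
    (Γ₁ : Matrix (Fin k × Fin α) (Fin α) F)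
    (Γ₂ : Matrix (Fin k × Fin α) (Fin (k - 1)) F)
    (Γ₃ : Matrix (Fin k × Fin α) (Fin α) F)
    (h1 : ∀ i a j, Γ₁ (i, a) j = if i = (⟨0, hk⟩ : Fin k) ∧ a = j then 1 else 0)
    (h2 : ∀ a j, Γ₂ ((⟨0, hk⟩ : Fin k), a) j = 0)
    (h3 : Submodule.span F (Set.range fun j => fun i => Γ₁ i j) ≤
          Submodule.span F (Set.range fun j => fun i => (Matrix.fromCols Γ₂ Γ₃) i j))
    (h4 : (Matrix.of (fun a j => Γ₃ ((⟨0, hk⟩ : Fin k), a) j) :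
        Matrix (Fin α) (Fin α) F).rank = α) :
    Submodule.span F (Set.range fun j => fun i => (Matrix.fromCols Γ₁ Γ₂) i j) =
      Submodule.span F (Set.range fun j => fun i => (Matrix.fromCols Γ₂ Γ₃) i j) :=
  interference_alignment_colspace_eq_general hk Γ₁ Γ₂ Γ₃ h1 h2 h3
end

section
/- Under the hypotheses of the interference-alignment setup (Γ_1, Γ_2, Γ_3 as above with colspace(Γ_1) ⊆ colspace([Γ_2 | Γ_3]) and the block structure (i),(ii)), the first block-row of Γ_3 (an α×α matrix) must be invertible, i.e., the desired components of the α parity-node repair vectors are linearly independent. -/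
/-!
Every column of `Γ₁` is a combination of the columns of `[Γ₂ | Γ₃]`, so `Γ₁ = [Γ₂ | Γ₃] X`
for some `X`. On the first block row `Γ₁` is the identity and `Γ₂` vanishes, so there this
reads `I = Γ₃⁽⁰⁾ X₂`: the first block `Γ₃⁽⁰⁾` of `Γ₃` has a right inverse.
-/

namespace Matrix

theorem submatrix_id_fromCols {α k m n p : Type*} (r : k → m) (B : Matrix m p α)
    (C : Matrix m n α) :
    (fromCols B C).submatrix r id = fromCols (B.submatrix r id) (C.submatrix r id) :=
  rfl

variable {R : Type*} [CommRing R] {m n p : Type*} [Fintype n] [Fintype p]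

theorem exists_eq_mul_of_range_mulVecLin_le {A : Matrix m n R} {B : Matrix m p R}
    (h : LinearMap.range A.mulVecLin ≤ LinearMap.range B.mulVecLin) :
    ∃ X : Matrix p n R, A = B * X := by
  have hcol : ∀ j, A.col j ∈ LinearMap.range B.mulVecLin := fun j =>
    h (A.range_mulVecLin ▸ Submodule.subset_span ⟨j, rfl⟩)
  choose x hx using hcol
  exact ⟨(of x)ᵀ, ext fun i j => (congrFun (hx j) i).symm⟩

theorem isUnit_submatrix_of_range_mulVecLin_le [DecidableEq n] (r : n → m)
    {A : Matrix m n R} {B : Matrix m p R} {C : Matrix m n R}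
    (hA : A.submatrix r id = 1) (hB : B.submatrix r id = 0)
    (h : LinearMap.range A.mulVecLin ≤ LinearMap.range (fromCols B C).mulVecLin) :
    IsUnit (C.submatrix r id) := by
  obtain ⟨X, hX⟩ := exists_eq_mul_of_range_mulVecLin_le h
  have hinv : C.submatrix r id * X.toRows₂ = 1 := calc
    C.submatrix r id * X.toRows₂
        = B.submatrix r id * X.toRows₁ + C.submatrix r id * X.toRows₂ := by
      rw [hB, Matrix.zero_mul, zero_add]
    _ = (fromCols B C).submatrix r id * X := by
      rw [submatrix_id_fromCols, ← fromCols_mul_fromRows, fromRows_toRows]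
    _ = A.submatrix r id := by
      rw [hX, submatrix_mul _ X r id id Function.bijective_id, submatrix_id_id]
    _ = 1 := hA
  exact .of_mul_eq_one _ hinv

end Matrix

theorem desired_component_invertible_general
    {F : Type*} [Field F] {k α : ℕ} (hk : 0 < k)
    (Γ₁ : Matrix (Fin k × Fin α) (Fin α) F)
    (Γ₂ : Matrix (Fin k × Fin α) (Fin (k - 1)) F)
    (Γ₃ : Matrix (Fin k × Fin α) (Fin α) F)
    (h1 : ∀ i a j, Γ₁ (i, a) j = if i = (⟨0, hk⟩ : Fin k) ∧ a = j then 1 else 0)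
    (h2 : ∀ a j, Γ₂ ((⟨0, hk⟩ : Fin k), a) j = 0)
    (h3 : Submodule.span F (Set.range fun j => fun i => Γ₁ i j) ≤
          Submodule.span F (Set.range fun j => fun i => (Matrix.fromCols Γ₂ Γ₃) i j)) :
    IsUnit (Matrix.of (fun a j => Γ₃ ((⟨0, hk⟩ : Fin k), a) j) :
      Matrix (Fin α) (Fin α) F) := by
  have hΓ₁ : Γ₁.submatrix (fun a => (⟨0, hk⟩, a)) id = 1 := by
    ext a j
    simp [h1, Matrix.one_apply]
  have hΓ₂ : Γ₂.submatrix (fun a => (⟨0, hk⟩, a)) id = 0 := by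
    ext a j
    simp [h2]
  refine Matrix.isUnit_submatrix_of_range_mulVecLin_le _ hΓ₁ hΓ₂ ?_
  rw [Matrix.range_mulVecLin, Matrix.range_mulVecLin]
  exact h3

/-- In the interference-alignment setup, the desired (first) block of `Γ₃`
must be invertible. -/
theorem desired_component_invertible
    {F : Type*} [Field F] [Fintype F] {k α : ℕ} (hk : 0 < k)
    (Γ₁ : Matrix (Fin k × Fin α) (Fin α) F)
    (Γ₂ : Matrix (Fin k × Fin α) (Fin (k - 1)) F)
    (Γ₃ : Matrix (Fin k × Fin α) (Fin α) F)
    (h1 : ∀ i a j, Γ₁ (i, a) j = if i = (⟨0, hk⟩ : Fin k) ∧ a = j then 1 else 0)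
    (h2 : ∀ a j, Γ₂ ((⟨0, hk⟩ : Fin k), a) j = 0)
    (h3 : Submodule.span F (Set.range fun j => fun i => Γ₁ i j) ≤
          Submodule.span F (Set.range fun j => fun i => (Matrix.fromCols Γ₂ Γ₃) i j)) :
    IsUnit (Matrix.of (fun a j => Γ₃ ((⟨0, hk⟩ : Fin k), a) j) :
      Matrix (Fin α) (Fin α) F) :=
  desired_component_invertible_general hk Γ₁ Γ₂ Γ₃ h1 h2 h3
end

section
/- Under the hypotheses of the interference-alignment setup, for every i in {2,...,k} and for every vector v in the column space of the i-th block of Γ_3, v lies in the column space of the i-th block of [Γ_1 | Γ_2]; moreover the i-th block of Γ_1 is zero, so the i-th block of Γ_3 has column space contained in the column space of the i-th block of Γ_2. In particular, if Γ_2 consists of k-1 single columns γ^{(2)},...,γ^{(k)} where γ^{(j)} has nonzero entries only in block j, then each interference block of Γ_3 has rank at most 1 (interference alignment is necessary). -/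
/-!
Column containment `Γ₁ ⊆ [Γ₂ | Γ₃]` means `Γ₁ = Γ₂ C + Γ₃ D` for some matrices `C`, `D`.
On the signal block `Γ₂` vanishes and `Γ₁` is the identity, so `Γ₃⁰ D = 1` and `D` is invertible
with inverse `Γ₃⁰`. On an interference block `Γ₁` vanishes, hence `Γ₃ⁱ = -Γ₂ⁱ C Γ₃⁰` factors
through `Γ₂ⁱ`, whose only nonzero column is the one belonging to block `i`.
-/

open Matrix Submodule Set

namespace Matrix

variable {R : Type*} {m n p : Type*} [Fintype n] [Fintype p]

theorem span_range_col_le_iff_exists_eq_mul [CommRing R] [DecidableEq n]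
    {A : Matrix m n R} {B : Matrix m p R} :
    span R (range A.col) ≤ span R (range B.col) ↔ ∃ X : Matrix p n R, A = B * X := by
  simp_rw [← range_mulVecLin]
  constructor
  · intro h
    have hcol (j : n) : ∃ x, B *ᵥ x = A.col j :=
      h ⟨Pi.single j 1, by ext i; simp⟩
    choose x hx using hcol
    refine ⟨of fun l j => x j l, ?_⟩
    ext i j
    simpa [mul_apply, mulVec, dotProduct] using (congrFun (hx j) i).symm
  · rintro ⟨X, rfl⟩
    rw [mulVecLin_mul]
    exact LinearMap.range_comp_le_range _ _

theorem rank_le_one_of_forall_ne_eq_zero [Field R] {M : Matrix m n R} (j₀ : n)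
    (h : ∀ i j, j ≠ j₀ → M i j = 0) : M.rank ≤ 1 := by
  have hle : span R (range M.col) ≤ R ∙ M.col j₀ := by
    rw [span_le]
    rintro _ ⟨j, rfl⟩
    by_cases hj : j = j₀
    · exact hj ▸ mem_span_singleton_self _
    · simp [show M.col j = 0 from funext fun i => h i j hj]
  rw [rank_eq_finrank_span_cols]
  calc Module.finrank R (span R (range M.col))
      ≤ Module.finrank R (R ∙ M.col j₀) := finrank_mono hle
    _ ≤ 1 := (finrank_span_le_card _).trans (by simp)

theorem eq_mul_neg_of_mul_eq_one_of_add_mul_eq_zero {l : Type*} [CommRing R] [Fintype m]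
    [DecidableEq m] {A₀ D : Matrix m m R} {A : Matrix l m R} {B : Matrix l p R}
    {C : Matrix p m R} (h₀ : A₀ * D = 1) (h : B * C + A * D = 0) : A = B * -(C * A₀) := by
  have hD : D * A₀ = 1 := mul_eq_one_comm.1 h₀
  calc A = A * D * A₀ := by rw [Matrix.mul_assoc, hD, Matrix.mul_one]
    _ = -(B * C) * A₀ := by rw [eq_neg_of_add_eq_zero_right h]
    _ = B * -(C * A₀) := by rw [Matrix.neg_mul, Matrix.mul_neg, Matrix.mul_assoc]

end Matrix

theorem interference_alignment_necessary_general
    {F : Type*} [Field F] {k α : ℕ} (hk : 0 < k)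
    (Γ₁ : Matrix (Fin k × Fin α) (Fin α) F)
    (Γ₂ : Matrix (Fin k × Fin α) {j : Fin k // j ≠ (⟨0, hk⟩ : Fin k)} F)
    (Γ₃ : Matrix (Fin k × Fin α) (Fin α) F)
    (h1 : ∀ i a j, Γ₁ (i, a) j = if i = (⟨0, hk⟩ : Fin k) ∧ a = j then 1 else 0)
    (h2 : ∀ (i : Fin k) (a : Fin α) (j : {j : Fin k // j ≠ (⟨0, hk⟩ : Fin k)}),
      i ≠ j.val → Γ₂ (i, a) j = 0)
    (h3 : Submodule.span F (Set.range fun j => fun i => Γ₁ i j) ≤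
          Submodule.span F (Set.range fun j => fun i => (Matrix.fromCols Γ₂ Γ₃) i j)) :
    ∀ i : Fin k, i ≠ (⟨0, hk⟩ : Fin k) →
      (Submodule.span F (Set.range fun j : Fin α => fun a => Γ₃ (i, a) j) ≤
        Submodule.span F
          (Set.range fun j : {j : Fin k // j ≠ (⟨0, hk⟩ : Fin k)} => fun a => Γ₂ (i, a) j)) ∧
      (Matrix.of (fun a j => Γ₃ (i, a) j) : Matrix (Fin α) (Fin α) F).rank ≤ 1 := by
  -- The statement's blocks `fun a j => M (r, a) j` are definitionally `M.submatrix (Prod.mk r) id`,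
  -- and its column spans are definitionally `span F (range M.col)`.
  intro i hi
  obtain ⟨X, hX⟩ := (span_range_col_le_iff_exists_eq_mul (B := fromCols Γ₂ Γ₃)).1 h3
  have hΓ : Γ₁ = Γ₂ * X.toRows₁ + Γ₃ * X.toRows₂ := by
    rw [← fromCols_mul_fromRows, fromRows_toRows, hX]
  have hblock (r : Fin k) : Γ₁.submatrix (Prod.mk r) id =
      Γ₂.submatrix (Prod.mk r) id * X.toRows₁ + Γ₃.submatrix (Prod.mk r) id * X.toRows₂ := by
    rw [hΓ]
    rfl
  have hsignal : Γ₃.submatrix (Prod.mk ⟨0, hk⟩) id * X.toRows₂ = 1 := by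
    have hΓ₁ : Γ₁.submatrix (Prod.mk ⟨0, hk⟩) id = 1 := by ext a j; simp [h1, one_apply]
    have hΓ₂ : Γ₂.submatrix (Prod.mk ⟨0, hk⟩) id = 0 := by
      ext a j; exact h2 _ _ _ (Ne.symm j.prop)
    simpa [hΓ₁, hΓ₂] using (hblock ⟨0, hk⟩).symm
  have hinterference : Γ₂.submatrix (Prod.mk i) id * X.toRows₁ +
      Γ₃.submatrix (Prod.mk i) id * X.toRows₂ = 0 := by
    rw [← hblock]; ext a j; simp [h1, hi]
  have hfactor := eq_mul_neg_of_mul_eq_one_of_add_mul_eq_zero hsignal hinterference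
  refine ⟨span_range_col_le_iff_exists_eq_mul.2 ⟨_, hfactor⟩, ?_⟩
  calc (Γ₃.submatrix (Prod.mk i) id).rank ≤ (Γ₂.submatrix (Prod.mk i) id).rank :=
        hfactor ▸ rank_mul_le_left _ _
    _ ≤ 1 := rank_le_one_of_forall_ne_eq_zero ⟨i, hi⟩ fun a j hj =>
        h2 i a j fun h => hj (Subtype.ext h.symm)

/-- Necessity of interference alignment: each interference block of `Γ₃` has
column space contained in that of the corresponding block of `Γ₂`, hence rank at most 1. -/
theorem interference_alignment_necessary
    {F : Type*} [Field F] [Fintype F] {k α : ℕ} (hk : 0 < k)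
    (Γ₁ : Matrix (Fin k × Fin α) (Fin α) F)
    (Γ₂ : Matrix (Fin k × Fin α) {j : Fin k // j ≠ (⟨0, hk⟩ : Fin k)} F)
    (Γ₃ : Matrix (Fin k × Fin α) (Fin α) F)
    (h1 : ∀ i a j, Γ₁ (i, a) j = if i = (⟨0, hk⟩ : Fin k) ∧ a = j then 1 else 0)
    (h2 : ∀ (i : Fin k) (a : Fin α) (j : {j : Fin k // j ≠ (⟨0, hk⟩ : Fin k)}),
      i ≠ j.val → Γ₂ (i, a) j = 0)
    (h3 : Submodule.span F (Set.range fun j => fun i => Γ₁ i j) ≤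
          Submodule.span F (Set.range fun j => fun i => (Matrix.fromCols Γ₂ Γ₃) i j)) :
    ∀ i : Fin k, i ≠ (⟨0, hk⟩ : Fin k) →
      (Submodule.span F (Set.range fun j : Fin α => fun a => Γ₃ (i, a) j) ≤
        Submodule.span F
          (Set.range fun j : {j : Fin k // j ≠ (⟨0, hk⟩ : Fin k)} => fun a => Γ₂ (i, a) j)) ∧
      (Matrix.of (fun a j => Γ₃ (i, a) j) : Matrix (Fin α) (Fin α) F).rank ≤ 1 :=
  interference_alignment_necessary_general hk Γ₁ Γ₂ Γ₃ h1 h2 h3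
end

section
/- Code shortening preserves the MSR property: if there exists an [n' = n+1, k' = k+1, d' = d+1] linear systematic exact-repair MSR code with β = 1 (so α' = d'-k'+1 and B' = k'α'), then there exists an [n, k, d] linear systematic exact-repair MSR code with β = 1, α = d-k+1 = α', and B = kα = B' - α'. The shortened code is obtained by setting the α message symbols of one designated systematic node to zero. -/
/-!
Shortening keeps only the messages whose last systematic block is zero and deletes the last
systematic node. Every surviving node keeps the rows of its coding matrix that belong to the
remaining `k` message blocks.

For reconstruction, adjoin the deleted node to any `k` surviving nodes: in the resulting
`(k+1)`-node reconstruction matrix the columns of the deleted node are zero outside its own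
block and the identity on it, so its determinant equals that of the shortened reconstruction
matrix. For repair, use the deleted node as the extra helper: it stores only zeroed symbols,
so its contribution vanishes on the surviving rows.
-/

/-- A linear systematic exact-repair MSR code with parameters `[n, k, d]` and `β = 1`:
per-node storage `α = d - k + 1`, file size `B = k * α`, the first `k` nodes systematic,
MDS reconstruction from any `k` nodes, and exact repair of any systematic node from
any `d` of the remaining nodes, one symbol from each. -/
structure SysExactMSR (F : Type*) [Field F] (n k d : ℕ) where
  hkd : k ≤ d
  hdn : d < n
  G : Fin n → Matrix (Fin k × Fin (d - k + 1)) (Fin (d - k + 1)) F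
  systematic : ∀ ℓ : Fin k, ∀ i a j,
    G (Fin.castLE (by omega) ℓ) (i, a) j = if i = ℓ ∧ a = j then 1 else 0
  mds : ∀ s : Fin k → Fin n, Function.Injective s →
    IsUnit (Matrix.of (fun i (j : Fin k × Fin (d - k + 1)) => G (s j.1) i j.2) :
      Matrix (Fin k × Fin (d - k + 1)) (Fin k × Fin (d - k + 1)) F)
  repair : ∀ ℓ : Fin k, ∀ h : Fin d → Fin n, Function.Injective h →
    (∀ i, h i ≠ Fin.castLE (by omega) ℓ) →
    ∃ (μ : Fin d → Fin (d - k + 1) → F) (ν : Fin (d - k + 1) → Fin d → F),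
      ∀ j : Fin (d - k + 1),
        (fun r => G (Fin.castLE (by omega) ℓ) r j) =
          ∑ i : Fin d, ν j i • (G (h i)).mulVec (μ i)

open Matrix

theorem Fin.succAbove_castLE_last_castLE {k n : ℕ} (h : k ≤ n) (ℓ : Fin k) :
    (Fin.castLE (Nat.succ_le_succ h) (Fin.last k)).succAbove (Fin.castLE h ℓ) =
      Fin.castLE (Nat.succ_le_succ h) ℓ.castSucc := by
  rw [Fin.succAbove_of_castSucc_lt _ _ (by simp [Fin.lt_def])]
  rfl

theorem Fin.snoc_comp_succAbove_injective {m n : ℕ} (p : Fin (n + 1)) {f : Fin m → Fin n}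
    (hf : Function.Injective f) :
    Function.Injective (Fin.snoc (p.succAbove ∘ f) p : Fin (m + 1) → Fin (n + 1)) :=
  Fin.snoc_injective_of_injective (Fin.succAbove_right_injective.comp hf) fun ⟨_, hm⟩ =>
    Fin.succAbove_ne _ _ hm

theorem Matrix.det_eq_det_submatrix_castSucc {R A : Type*} [CommRing R] [Fintype A]
    [DecidableEq A] {k : ℕ} (M : Matrix (Fin (k + 1) × A) (Fin (k + 1) × A) R)
    (hzero : ∀ (i : Fin k) a b, M (i.castSucc, a) (Fin.last k, b) = 0)
    (hone : ∀ a b, M (Fin.last k, a) (Fin.last k, b) = (1 : Matrix A A R) a b) :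
    M.det = (M.submatrix (Prod.map Fin.castSucc id) (Prod.map Fin.castSucc id)).det := by
  let e : (Fin k × A) ⊕ A ≃ Fin (k + 1) × A :=
    { toFun := Sum.elim (Prod.map Fin.castSucc id) (Prod.mk (Fin.last k))
      invFun := fun r => Fin.lastCases (Sum.inr r.2) (fun i => Sum.inl (i, r.2)) r.1
      left_inv := by rintro (⟨i, a⟩ | a) <;> simp
      right_inv := by rintro ⟨i, a⟩; induction i using Fin.lastCases <;> simp }
  have hblocks : M.submatrix e e = fromBlocks
      (M.submatrix (Prod.map Fin.castSucc id) (Prod.map Fin.castSucc id)) 0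
      (M.submatrix (fun a => (Fin.last k, a)) (Prod.map Fin.castSucc id)) 1 := by
    ext (⟨i, a⟩ | a) (⟨j, b⟩ | b) <;> simp [e, hzero, hone]
  rw [← det_submatrix_equiv_self e, hblocks, det_fromBlocks_zero₁₂, det_one, mul_one]

namespace SysExactMSR

variable {F : Type*} [Field F] {n k d : ℕ}

theorem k_le_n (C : SysExactMSR F n k d) : k ≤ n := C.hkd.trans C.hdn.le

theorem G_castLE_of_ne (C : SysExactMSR F n k d) {ℓ i : Fin k} (hi : i ≠ ℓ) (a j) :
    C.G (Fin.castLE C.k_le_n ℓ) (i, a) j = 0 := by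
  simp [C.systematic, hi]

theorem mulVec_G_castLE_of_ne (C : SysExactMSR F n k d) {ℓ i : Fin k} (hi : i ≠ ℓ)
    (v : Fin (d - k + 1) → F) (a : Fin (d - k + 1)) :
    (C.G (Fin.castLE C.k_le_n ℓ) *ᵥ v) (i, a) = 0 := by
  simp [mulVec, dotProduct, C.G_castLE_of_ne hi]

section Shortening

variable (C : SysExactMSR F (n + 1) (k + 1) (d + 1))

def deletedNode : Fin (n + 1) := Fin.castLE C.k_le_n (Fin.last k)

/-- `d + 1 - (k + 1)` and `d - k` are equal but not definitionally so. -/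
def alphaEquiv : Fin (d - k + 1) ≃ Fin (d + 1 - (k + 1) + 1) := finCongr (by omega)

theorem deletedNode_succAbove_castLE (ℓ : Fin k) :
    C.deletedNode.succAbove (Fin.castLE (by have := C.k_le_n; omega) ℓ) =
      Fin.castLE C.k_le_n ℓ.castSucc :=
  Fin.succAbove_castLE_last_castLE _ ℓ

def shortenedG (m : Fin n) : Matrix (Fin k × Fin (d - k + 1)) (Fin (d - k + 1)) F :=
  (C.G (C.deletedNode.succAbove m)).submatrix (Prod.map Fin.castSucc alphaEquiv) alphaEquiv

theorem shortenedG_systematic (ℓ : Fin k) (i a j) :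
    C.shortenedG (Fin.castLE (by have := C.k_le_n; omega) ℓ) (i, a) j =
      if i = ℓ ∧ a = j then 1 else 0 := by
  simp only [shortenedG, submatrix_apply, Prod.map, deletedNode_succAbove_castLE]
  rw [C.systematic]
  simp [Fin.castSucc_inj]

theorem shortenedG_mds (s : Fin k → Fin n) (hs : Function.Injective s) :
    IsUnit (Matrix.of fun i (j : Fin k × Fin (d - k + 1)) => C.shortenedG (s j.1) i j.2) := by
  let s' : Fin (k + 1) → Fin (n + 1) := Fin.snoc (C.deletedNode.succAbove ∘ s) C.deletedNode
  have hs' : Function.Injective s' := Fin.snoc_comp_succAbove_injective _ hs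
  let M := Matrix.of fun i (j : Fin (k + 1) × Fin (d + 1 - (k + 1) + 1)) => C.G (s' j.1) i j.2
  have hM : (Matrix.of fun i (j : Fin k × Fin (d - k + 1)) => C.shortenedG (s j.1) i j.2) =
      (M.submatrix (Prod.map Fin.castSucc id) (Prod.map Fin.castSucc id)).submatrix
        (Equiv.prodCongr (Equiv.refl _) alphaEquiv)
        (Equiv.prodCongr (Equiv.refl _) alphaEquiv) := by
    ext ⟨i, a⟩ ⟨j, b⟩
    simp [M, s', shortenedG]
  have hdet :
      M.det = (M.submatrix (Prod.map Fin.castSucc id) (Prod.map Fin.castSucc id)).det := by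
    refine M.det_eq_det_submatrix_castSucc (fun i a b => ?_) (fun a b => ?_)
    · simp only [M, s', of_apply, Fin.snoc_last]
      exact C.G_castLE_of_ne (Fin.castSucc_lt_last i).ne _ _
    · simp [M, s', deletedNode, C.systematic, one_apply]
  rw [isUnit_iff_isUnit_det, hM, det_submatrix_equiv_self, ← hdet, ← isUnit_iff_isUnit_det]
  exact C.mds s' hs'

theorem shortenedG_repair (ℓ : Fin k) (h : Fin d → Fin n) (hinj : Function.Injective h)
    (havoid : ∀ i, h i ≠ Fin.castLE (by have := C.k_le_n; omega) ℓ) :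
    ∃ (μ : Fin d → Fin (d - k + 1) → F) (ν : Fin (d - k + 1) → Fin d → F),
      ∀ j : Fin (d - k + 1),
        (fun r => C.shortenedG (Fin.castLE (by have := C.k_le_n; omega) ℓ) r j) =
          ∑ i : Fin d, ν j i • (C.shortenedG (h i)).mulVec (μ i) := by
  let h' : Fin (d + 1) → Fin (n + 1) := Fin.snoc (C.deletedNode.succAbove ∘ h) C.deletedNode
  have hh' : Function.Injective h' := Fin.snoc_comp_succAbove_injective _ hinj
  have havoid' : ∀ i, h' i ≠ Fin.castLE C.k_le_n ℓ.castSucc := by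
    refine Fin.lastCases ?_ (fun i => ?_)
    · simp [h', deletedNode, Fin.ext_iff, ℓ.isLt.ne']
    · simp only [h', Fin.snoc_castSucc, Function.comp_apply]
      rw [← C.deletedNode_succAbove_castLE ℓ]
      exact Fin.succAbove_right_injective.ne (havoid i)
  obtain ⟨μ, ν, hrep⟩ := C.repair ℓ.castSucc h' hh' havoid'
  refine ⟨fun i => μ i.castSucc ∘ alphaEquiv, fun j i => ν (alphaEquiv j) i.castSucc,
    fun j => ?_⟩
  ext r
  have hlast :
      (C.G (h' (Fin.last d)) *ᵥ μ (Fin.last d)) (Prod.map Fin.castSucc alphaEquiv r) = 0 := by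
    simp only [h', Fin.snoc_last]
    exact C.mulVec_G_castLE_of_ne (Fin.castSucc_lt_last r.1).ne _ _
  have hrow := congrFun (hrep (alphaEquiv j)) (Prod.map Fin.castSucc alphaEquiv r)
  simp only [Fin.sum_univ_castSucc, Finset.sum_apply, Pi.smul_apply, smul_eq_mul,
    hlast, mul_zero, add_zero] at hrow
  simp only [shortenedG, submatrix_mulVec_equiv, submatrix_apply, Finset.sum_apply,
    Pi.smul_apply, smul_eq_mul]
  rw [deletedNode_succAbove_castLE, hrow]
  simp [h', Function.comp_assoc]

def shorten : SysExactMSR F n k d where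
  hkd := Nat.le_of_succ_le_succ C.hkd
  hdn := Nat.lt_of_succ_lt_succ C.hdn
  G := C.shortenedG
  systematic := C.shortenedG_systematic
  mds := C.shortenedG_mds
  repair := C.shortenedG_repair

end Shortening

end SysExactMSR

theorem code_shortening_general {F : Type*} [Field F] (n k d : ℕ)
    (h : Nonempty (SysExactMSR F (n + 1) (k + 1) (d + 1))) :
    Nonempty (SysExactMSR F n k d) :=
  h.map SysExactMSR.shorten

/-- Code shortening: an `[n+1, k+1, d+1]` linear systematic exact-repair MSR code
yields an `[n, k, d]` one (with the same `α = d - k + 1`). -/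
theorem code_shortening {F : Type*} [Field F] [Fintype F] (n k d : ℕ)
    (h : Nonempty (SysExactMSR F (n + 1) (k + 1) (d + 1))) :
    Nonempty (SysExactMSR F n k d) :=
  code_shortening_general n k d h
end

section
/- In the MISER code with n = 2k, d = n-1, α = k, built from an α×α matrix Ψ all of whose submatrices are full rank and a scalar ε with ε ≠ 0 and ε² ≠ 1: a failed systematic node ℓ can be exactly repaired from d = n-1 symbols, one from each remaining node. Formally, the B×α matrix Γ whose columns are the ℓ-th columns of the parity-node generator matrices G^{(k+1)},...,G^{(k+α)}, together with the unit vectors supported on position ℓ of each block i ≠ ℓ, linearly span the ℓ-th block identity: there is an α×α matrix M and a (k-1)×α matrix N such that Γ·M plus the correction from systematic nodes equals the matrix with I_α in block ℓ and zeros elsewhere. -/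
open Matrix

theorem Fintype.sum_subtype_mul_ite_eq_and {α R : Type*} [Fintype α] [DecidableEq α] [Semiring R]
    (p : α → Prop) [DecidablePred p] (g : α → R) (a : α) (c : Prop) [Decidable c] :
    ∑ i : {i // p i}, g i * (if a = i.val ∧ c then (1 : R) else 0) =
      if p a ∧ c then g a else 0 := by
  by_cases hc : c
  · by_cases ha : p a
    · rw [Fintype.sum_eq_single ⟨a, ha⟩ fun i hi => by
        simp [show a ≠ i.val from fun h => hi (Subtype.ext h.symm)]]
      simp [ha, hc]
    · refine (Fintype.sum_eq_zero _ fun i => ?_).trans (if_neg (by tauto)).symm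
      simp [show a ≠ i.val from fun h => ha (h ▸ i.2)]
  · simp [hc]

theorem Matrix.of_ite_ite_mul_apply {ι κ ν R : Type*} [Fintype κ] [DecidableEq ι] [Semiring R]
    (ε : R) (Ψ : Matrix ι κ R) (M : Matrix κ ν R) (ℓ : ι) (r : ι × ι) (j : ν) :
    ((Matrix.of fun (r' : ι × ι) (m : κ) =>
        if r'.1 = ℓ then ε * Ψ r'.2 m else if r'.2 = ℓ then Ψ r'.1 m else 0) * M) r j =
      if r.1 = ℓ then ε * (Ψ * M) r.2 j else if r.2 = ℓ then (Ψ * M) r.1 j else 0 := by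
  simp only [mul_apply, of_apply]
  split_ifs <;> simp [Finset.mul_sum, mul_assoc]

theorem miser_systematic_repair_general
    {F : Type*} [Field F] {k : ℕ}
    (Ψ : Matrix (Fin k) (Fin k) F)
    (hΨ : ∀ (r : ℕ) (rows cols : Fin r → Fin k), Function.Injective rows →
      Function.Injective cols → IsUnit (Ψ.submatrix rows cols))
    (ε : F) (hε : ε ≠ 0)
    (ℓ : Fin k) :
    ∃ (M : Matrix (Fin k) (Fin k) F) (N : {i : Fin k // i ≠ ℓ} → Fin k → F),
      ∀ (r : Fin k × Fin k) (j : Fin k),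
        ((Matrix.of (fun (r' : Fin k × Fin k) (m : Fin k) =>
            if r'.1 = ℓ then ε * Ψ r'.2 m
            else if r'.2 = ℓ then Ψ r'.1 m else 0) :
          Matrix (Fin k × Fin k) (Fin k) F) * M) r j
          + ∑ i : {i : Fin k // i ≠ ℓ},
              N i j * (if r.1 = i.val ∧ r.2 = ℓ then (1 : F) else 0)
        = if r.1 = ℓ ∧ r.2 = j then 1 else 0 := by
  have hΨ_unit : IsUnit Ψ.det :=
    (isUnit_iff_isUnit_det Ψ).mp <| by
      simpa using hΨ k id id Function.injective_id Function.injective_id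
  have hΨM : Ψ * (ε⁻¹ • Ψ⁻¹) = ε⁻¹ • 1 := by rw [Matrix.mul_smul, mul_nonsing_inv _ hΨ_unit]
  -- With `M = ε⁻¹ Ψ⁻¹`, column `j` of `Γ M` is `e_j` in block `ℓ` plus `ε⁻¹ δ_ij` at position `ℓ`
  -- of each other block `i`, which the symbol from systematic node `i` cancels.
  refine ⟨ε⁻¹ • Ψ⁻¹, fun i j => -ε⁻¹ * (1 : Matrix (Fin k) (Fin k) F) i j, fun r j => ?_⟩
  rw [of_ite_ite_mul_apply, hΨM,
    Fintype.sum_subtype_mul_ite_eq_and (fun i => i ≠ ℓ) (fun i => -ε⁻¹ * (1 : Matrix _ _ F) i j)]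
  simp only [Matrix.smul_apply, smul_eq_mul, one_apply]
  split_ifs <;> simp_all

/-- Exact repair of a systematic node in the MISER code (`n = 2k`, `d = n - 1`,
`α = k`): the `ℓ`-th columns of the parity-node generator matrices, together with
the unit vectors passed by the other systematic nodes, span the block-`ℓ` identity. -/
theorem miser_systematic_repair
    {F : Type*} [Field F] [Fintype F] {k : ℕ}
    (Ψ : Matrix (Fin k) (Fin k) F)
    (hΨ : ∀ (r : ℕ) (rows cols : Fin r → Fin k), Function.Injective rows →
      Function.Injective cols → IsUnit (Ψ.submatrix rows cols))
    (ε : F) (hε : ε ≠ 0) (hε2 : ε ^ 2 ≠ 1)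
    (ℓ : Fin k) :
    ∃ (M : Matrix (Fin k) (Fin k) F) (N : {i : Fin k // i ≠ ℓ} → Fin k → F),
      ∀ (r : Fin k × Fin k) (j : Fin k),
        ((Matrix.of (fun (r' : Fin k × Fin k) (m : Fin k) =>
            if r'.1 = ℓ then ε * Ψ r'.2 m
            else if r'.2 = ℓ then Ψ r'.1 m else 0) :
          Matrix (Fin k × Fin k) (Fin k) F) * M) r j
          + ∑ i : {i : Fin k // i ≠ ℓ},
              N i j * (if r.1 = i.val ∧ r.2 = ℓ then (1 : F) else 0)
        = if r.1 = ℓ ∧ r.2 = j then 1 else 0 :=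
  miser_systematic_repair_general Ψ hΨ ε hε ℓ
end

section
/- In the MISER code with n = 2k, d = n-1, α = k over F_q (Ψ an α×α matrix with all submatrices full rank, ε ≠ 0, ε² ≠ 1): for any k-subset of nodes, the B×B matrix formed by concatenating their generator matrices is invertible (the code is MDS). -/
/-!
Take a kernel vector of the code matrix, i.e. one vector `x j ∈ Fᵏ` per chosen node, and let `A`
be the set of systematic nodes chosen. Put `u a b = ∑ ψ⁽ʲ⁾_b (x j)_a` over the chosen parity
nodes `j`. In a row block `a ∉ A` only parity nodes contribute, and the rows read
`ε u(a,b) + u(b,a) = 0` for `b ≠ a` and `ε u(a,a) = 0`. Since `ε ≠ 0` and `ε² ≠ 1`, `u` vanishes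
on `Aᶜ × Aᶜ`; as `Aᶜ` has as many elements as there are parity nodes, the square submatrix of `Ψ`
with rows `Aᶜ` and the parity columns is invertible, so `(x j)_a = 0` for every parity node `j`
and every `a ∉ A`. Fed back into the relations this gives `u(a,b) = 0` for `a ∈ A`, `b ∉ A`,
hence `(x j)_a = 0` for `a ∈ A` as well. Once the parity vectors vanish, row block `s j` of a
systematic node `j` reads off `x j = 0`.
-/

/-- The nodal generator matrices of the MISER code for `n = 2k`, `d = n - 1`, `α = k`:
nodes `m < k` are systematic, nodes `k ≤ m < 2k` are parity nodes built from the
columns of `Ψ` and the scalar `ε`. -/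
def miserGen {F : Type*} [Field F] (k : ℕ) (Ψ : Matrix (Fin k) (Fin k) F) (ε : F) :
    Fin (2 * k) → Matrix (Fin k × Fin k) (Fin k) F :=
  fun m => Matrix.of fun r j =>
    if (m : ℕ) < k then (if (r.1 : ℕ) = (m : ℕ) ∧ r.2 = j then 1 else 0)
    else if r.1 = j then ε * Ψ r.2 ⟨(m : ℕ) - k, by have := m.isLt; omega⟩
    else if r.2 = j then Ψ r.1 ⟨(m : ℕ) - k, by have := m.isLt; omega⟩ else 0

open Finset Matrix

theorem Matrix.of_mulVec_eq_sum {R ι κ μ : Type*} [NonUnitalNonAssocSemiring R] [Fintype ι]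
    [Fintype κ] (G : ι → Matrix μ κ R) (v : ι × κ → R) :
    (of fun r (j : ι × κ) => G j.1 r j.2) *ᵥ v = ∑ i, G i *ᵥ fun j => v (i, j) := by
  ext r
  simp [mulVec, dotProduct, Fintype.sum_prod_type, Finset.sum_apply]

def Matrix.IsSuperregular {R m n : Type*} [CommRing R] (Ψ : Matrix m n R) : Prop :=
  ∀ (r : ℕ) (rows : Fin r → m) (cols : Fin r → n), Function.Injective rows →
    Function.Injective cols → IsUnit (Ψ.submatrix rows cols)

theorem Matrix.IsSuperregular.eq_zero_of_sum_mul_eq_zero {R m n ι : Type*} [CommRing R]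
    {Ψ : Matrix m n R} (hΨ : Ψ.IsSuperregular) {B : Finset m} {T : Finset ι} (hcard : #B = #T)
    {c : ι → n} (hc : Set.InjOn c T) {w : ι → R}
    (hw : ∀ r ∈ B, ∑ j ∈ T, Ψ r (c j) * w j = 0) : ∀ j ∈ T, w j = 0 := by
  let eT : Fin #T ≃ T := T.equivFin.symm
  let eB : Fin #T ≃ B := (B.equivFin.trans (finCongr hcard)).symm
  have hcols : Function.Injective fun i => c (eT i) :=
    fun a b hab => eT.injective (Subtype.ext (hc (eT a).2 (eT b).2 hab))
  have hrows : Function.Injective fun i => (eB i : m) :=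
    fun a b hab => eB.injective (Subtype.ext hab)
  have hinj := mulVec_injective_of_det_mem_nonZeroDivisors
    ((hΨ _ _ _ hrows hcols).map (detMonoidHom (n := Fin #T) (R := R))).mem_nonZeroDivisors
  have hw' : (fun i => w (eT i)) = 0 := by
    refine hinj ((funext fun i => ?_).trans (mulVec_zero _).symm)
    simp only [mulVec, dotProduct, submatrix_apply, Pi.zero_apply]
    rw [eT.sum_comp (fun j : T => Ψ (eB i) (c j) * w j)]
    exact (Finset.sum_coe_sort T fun j => Ψ (eB i) (c j) * w j).trans (hw _ (eB i).2)
  intro j hj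
  simpa using congrFun hw' (eT.symm ⟨j, hj⟩)

section Relations

variable {R κ : Type*} [CommRing R] [NoZeroDivisors R] [DecidableEq κ] {ε : R}

theorem eq_zero_of_skew_relations (hε : ε ≠ 0) (hε2 : ε ^ 2 ≠ 1) {C : Finset κ}
    {u : κ → κ → R} (hu : ∀ a ∈ C, ∀ b, ε * u a b + (if b = a then 0 else u b a) = 0) :
    ∀ a ∈ C, ∀ b ∈ C, u a b = 0 := by
  intro a ha b hb
  by_cases hab : b = a
  · subst hab
    simpa [hε] using hu b ha b
  · have h₁ := hu a ha b
    have h₂ := hu b hb a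
    rw [if_neg hab] at h₁
    rw [if_neg (Ne.symm hab)] at h₂
    have : (ε ^ 2 - 1) * u a b = 0 := by linear_combination ε * h₁ - h₂
    exact (mul_eq_zero.mp this).resolve_left (sub_ne_zero.mpr hε2)

theorem eq_zero_of_parity_relations {n ι : Type*} {Ψ : Matrix κ n R} (hΨ : Ψ.IsSuperregular)
    (hε : ε ≠ 0) (hε2 : ε ^ 2 ≠ 1) {P : Finset ι} {t : ι → n} (ht : Set.InjOn t P)
    {C : Finset κ} (hC : #C = #P) {x : ι → κ → R}
    (hx : ∀ a ∈ C, ∀ b, ε * ∑ j ∈ P, Ψ b (t j) * x j a +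
      (if b = a then 0 else ∑ j ∈ P, Ψ a (t j) * x j b) = 0) :
    ∀ j ∈ P, x j = 0 := by
  set u : κ → κ → R := fun a b => ∑ j ∈ P, Ψ b (t j) * x j a
  have recover : ∀ a, (∀ b ∈ C, u a b = 0) → ∀ j ∈ P, x j a = 0 :=
    fun a h => hΨ.eq_zero_of_sum_mul_eq_zero hC ht h
  have hC0 : ∀ a ∈ C, ∀ j ∈ P, x j a = 0 :=
    fun a ha => recover a (eq_zero_of_skew_relations hε hε2 hx a ha)
  have hall : ∀ a, ∀ j ∈ P, x j a = 0 := by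
    intro a
    by_cases ha : a ∈ C
    · exact hC0 a ha
    refine recover a fun b hb => ?_
    have hba : u b a = 0 := Finset.sum_eq_zero fun j hj => by simp [hC0 b hb j hj]
    simpa [u, hba, show a ≠ b by rintro rfl; exact ha hb] using hx b hb a
  exact fun j hj => funext fun a => hall a j hj

end Relations

def parityCol {k : ℕ} (m : Fin (2 * k)) : Fin k := ⟨m - k, by omega⟩

section Miser

variable {F : Type*} [Field F] {k : ℕ} {Ψ : Matrix (Fin k) (Fin k) F} {ε : F}
  {s : Fin k → Fin (2 * k)}

variable (Ψ ε) in
theorem miserGen_mulVec_of_lt {m : Fin (2 * k)} (hm : (m : ℕ) < k) (x : Fin k → F)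
    (r : Fin k × Fin k) : (miserGen k Ψ ε m *ᵥ x) r = if (r.1 : ℕ) = m then x r.2 else 0 := by
  simp [mulVec, dotProduct, miserGen, hm, ite_and]

variable (Ψ ε) in
theorem miserGen_mulVec_of_le {m : Fin (2 * k)} (hm : k ≤ (m : ℕ)) (x : Fin k → F)
    (r : Fin k × Fin k) : (miserGen k Ψ ε m *ᵥ x) r =
      ε * Ψ r.2 (parityCol m) * x r.1 + if r.2 = r.1 then 0 else Ψ r.1 (parityCol m) * x r.2 := by
  simp only [mulVec, dotProduct, miserGen, of_apply, not_lt.mpr hm, if_false]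
  by_cases h : r.2 = r.1
  · rw [Fintype.sum_eq_single r.1 fun j hj => by simp [h, Ne.symm hj]]
    simp [h, parityCol, mul_assoc]
  · rw [Fintype.sum_eq_add r.1 r.2 (Ne.symm h)]
    · simp [h, Ne.symm h, parityCol, mul_assoc]
    · intro j hj
      simp [Ne.symm hj.1, Ne.symm hj.2]

theorem card_uncovered_eq_card_parity (hs : Function.Injective s) :
    #{r : Fin k | ∀ j, (s j : ℕ) ≠ r} = #{j | k ≤ (s j : ℕ)} := by
  have hcovered : #{j | (s j : ℕ) < k} = #{r : Fin k | ¬∀ j, (s j : ℕ) ≠ r} := by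
    refine Finset.card_bij (fun j hj => ⟨s j, (mem_filter.mp hj).2⟩) (fun j _ => ?_)
      (fun a _ b _ hab => hs (Fin.ext (Fin.mk.inj_iff.mp hab))) (fun r hr => ?_)
    · simp
    · obtain ⟨j, hj⟩ := not_forall_not.mp (mem_filter.mp hr).2
      exact ⟨j, by simp [hj], Fin.ext hj⟩
  have h₁ := card_filter_add_card_filter_not (s := (univ : Finset (Fin k)))
    (fun r => ∀ j, (s j : ℕ) ≠ r)
  have h₂ := card_filter_add_card_filter_not (s := (univ : Finset (Fin k)))
    (fun j => (s j : ℕ) < k)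
  simp only [not_lt] at h₂
  omega

theorem sum_miserGen_mulVec_apply_of_uncovered (x : Fin k → Fin k → F) {a : Fin k}
    (ha : ∀ j, (s j : ℕ) ≠ a) (b : Fin k) :
    (∑ j, miserGen k Ψ ε (s j) *ᵥ x j) (a, b) =
      ε * ∑ j with k ≤ (s j : ℕ), Ψ b (parityCol (s j)) * x j a +
        if b = a then 0 else ∑ j with k ≤ (s j : ℕ), Ψ a (parityCol (s j)) * x j b := by
  have hparity : ∀ j, (miserGen k Ψ ε (s j) *ᵥ x j) (a, b) ≠ 0 → k ≤ (s j : ℕ) := by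
    intro j hj
    by_contra hlt
    simp [miserGen_mulVec_of_lt Ψ ε (not_le.mp hlt), (ha j).symm] at hj
  rw [Finset.sum_apply, ← Finset.sum_filter_of_ne fun j _ => hparity j,
    Finset.sum_congr rfl fun j hj => miserGen_mulVec_of_le Ψ ε (mem_filter.mp hj).2 (x j) (a, b),
    Finset.sum_add_distrib, Finset.mul_sum]
  split_ifs <;> simp [mul_assoc]

theorem miserGen_parity_eq_zero (hΨ : Ψ.IsSuperregular) (hε : ε ≠ 0) (hε2 : ε ^ 2 ≠ 1)
    (hs : Function.Injective s) {x : Fin k → Fin k → F}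
    (hx : ∑ j, miserGen k Ψ ε (s j) *ᵥ x j = 0) {j : Fin k} (hj : k ≤ (s j : ℕ)) : x j = 0 := by
  have ht : Set.InjOn (fun j => parityCol (s j)) ↑({j | k ≤ (s j : ℕ)} : Finset (Fin k)) := by
    intro a ha b hb hab
    rw [mem_coe, mem_filter] at ha hb
    have := congrArg Fin.val hab
    simp only [parityCol] at this
    exact hs (Fin.ext (by omega))
  refine eq_zero_of_parity_relations hΨ hε hε2 ht (card_uncovered_eq_card_parity hs)
    (fun a ha b => ?_) j (by simpa using hj)
  rw [← sum_miserGen_mulVec_apply_of_uncovered x (mem_filter.mp ha).2, hx, Pi.zero_apply]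

theorem miserGen_eq_zero_of_sum_mulVec_eq_zero (hΨ : Ψ.IsSuperregular) (hε : ε ≠ 0)
    (hε2 : ε ^ 2 ≠ 1) (hs : Function.Injective s) {x : Fin k → Fin k → F}
    (hx : ∑ j, miserGen k Ψ ε (s j) *ᵥ x j = 0) (j : Fin k) : x j = 0 := by
  have hpar : ∀ {i}, k ≤ (s i : ℕ) → x i = 0 := miserGen_parity_eq_zero hΨ hε hε2 hs hx
  by_cases hj : k ≤ (s j : ℕ)
  · exact hpar hj
  funext b
  have hrow := congrFun hx (⟨s j, not_le.mp hj⟩, b)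
  rwa [Finset.sum_apply, Fintype.sum_eq_single j, miserGen_mulVec_of_lt Ψ ε (not_le.mp hj),
    if_pos rfl] at hrow
  intro i hij
  by_cases hi : k ≤ (s i : ℕ)
  · rw [hpar hi, mulVec_zero, Pi.zero_apply]
  · rw [miserGen_mulVec_of_lt Ψ ε (not_le.mp hi), if_neg fun h => hij (hs (Fin.ext h.symm))]

end Miser

theorem miser_mds_general
    {F : Type*} [Field F] {k : ℕ}
    (Ψ : Matrix (Fin k) (Fin k) F)
    (hΨ : ∀ (r : ℕ) (rows cols : Fin r → Fin k), Function.Injective rows →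
      Function.Injective cols → IsUnit (Ψ.submatrix rows cols))
    (ε : F) (hε : ε ≠ 0) (hε2 : ε ^ 2 ≠ 1) :
    ∀ s : Fin k → Fin (2 * k), Function.Injective s →
      IsUnit (Matrix.of (fun r (j : Fin k × Fin k) => miserGen k Ψ ε (s j.1) r j.2) :
        Matrix (Fin k × Fin k) (Fin k × Fin k) F) := by
  intro s hs
  refine (isUnit_iff_isUnit_det _).mpr (isUnit_iff_ne_zero.mpr fun hdet => ?_)
  obtain ⟨v, hv0, hv⟩ := exists_mulVec_eq_zero_iff.mpr hdet
  have hx : ∑ j, miserGen k Ψ ε (s j) *ᵥ (fun b => v (j, b)) = 0 :=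
    (of_mulVec_eq_sum (fun j => miserGen k Ψ ε (s j)) v).symm.trans hv
  exact hv0 (funext fun p =>
    congrFun (miserGen_eq_zero_of_sum_mulVec_eq_zero hΨ hε hε2 hs hx p.1) p.2)

/-- The MISER code is MDS: any `k` of the `2k` nodal generator matrices concatenate
to an invertible `B × B` matrix. -/
theorem miser_mds
    {F : Type*} [Field F] [Fintype F] {k : ℕ}
    (Ψ : Matrix (Fin k) (Fin k) F)
    (hΨ : ∀ (r : ℕ) (rows cols : Fin r → Fin k), Function.Injective rows →
      Function.Injective cols → IsUnit (Ψ.submatrix rows cols))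
    (ε : F) (hε : ε ≠ 0) (hε2 : ε ^ 2 ≠ 1) :
    ∀ s : Fin k → Fin (2 * k), Function.Injective s →
      IsUnit (Matrix.of (fun r (j : Fin k × Fin k) => miserGen k Ψ ε (s j.1) r j.2) :
        Matrix (Fin k × Fin k) (Fin k × Fin k) F) :=
  miser_mds_general Ψ hΨ ε hε hε2
end

section
/- Data reconstruction in the MISER code from two systematic nodes and one parity node (k = 3 case generalization): for any parity node m of the MISER code and any index i, the α×α block G^{(m)}_i is invertible; concretely, the α×α block whose j-th column is ε·ψ^{(m)} when j = i and ψ^{(m)}_i e_j otherwise is invertible whenever all entries ψ^{(m)}_j are nonzero and ε ≠ 0. -/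
/-- Each component block `G^{(m)}_i` of a MISER parity node is invertible: the matrix
whose `j`-th column is `ε • ψ` when `j = i` and `ψ i • e j` otherwise is invertible,
provided all entries of `ψ` are nonzero and `ε ≠ 0`. -/
theorem miser_block_invertible
    {F : Type*} [Field F] [Fintype F] {α : ℕ}
    (ψ : Fin α → F) (hψ : ∀ a, ψ a ≠ 0) (ε : F) (hε : ε ≠ 0) (i : Fin α) :
    IsUnit (Matrix.of (fun a j => if j = i then ε * ψ a else if a = j then ψ i else 0) :
      Matrix (Fin α) (Fin α) F) := by
  have heq : (Matrix.of (fun a j => if j = i then ε * ψ a else if a = j then ψ i else 0) :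
      Matrix (Fin α) (Fin α) F)
      = Matrix.updateCol (ψ i • (1 : Matrix (Fin α) (Fin α) F)) i (fun a => ε * ψ a) := by
    ext a j
    by_cases h : j = i <;> simp [Matrix.updateCol_apply, h, Matrix.one_apply, mul_comm]
  rw [heq, Matrix.isUnit_iff_isUnit_det]
  have : (Matrix.updateCol (ψ i • (1 : Matrix (Fin α) (Fin α) F)) i
      (fun a => ε * ψ a)).det = Matrix.cramer (ψ i • (1 : Matrix (Fin α) (Fin α) F))
        (fun a => ε * ψ a) i := (Matrix.cramer_apply _ _ _).symm
  rw [this, Matrix.cramer_smul, Matrix.cramer_one]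
  simp only [LinearMap.smul_apply, Pi.smul_apply, smul_eq_mul, Module.End.one_apply]
  exact (mul_ne_zero (pow_ne_zero _ (hψ i)) (mul_ne_zero hε (hψ i))).isUnit
end

section
/- Property 3 of exact-repair MSR codes (MDS property of the repair vectors): Assume d < 2k-1 (so k > α) and β = 1. Let γ^{(m,1)},...,γ^{(m,k)} ∈ colspace(G^{(m)}) be the repair vectors passed by parity node m, where G^{(m)} is B×α with all k row-blocks invertible; assume for each failed node ℓ the desired blocks {γ^{(m,ℓ)}_ℓ}_m over the α parity nodes are linearly independent, and for each ℓ and each i ≠ ℓ the interference blocks {γ^{(m,ℓ)}_i}_m span dimension at most 1. Then for each parity node m, every subset of α vectors among {γ^{(m,1)},...,γ^{(m,k)}} is linearly independent. -/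
/-!
Fix a parity node `m` and `α` distinct systematic nodes `s j`; write `γ^{(m,ℓ)} = G^{(m)} θ^{(m,ℓ)}`.
Since `α < k`, some systematic node `i` is not among the `s j`. On block `i` all the chosen
repair vectors are interference, so the block of `γ^{(m,s j)}` is a nonzero multiple of a direction
`u_j` that does not depend on `m`. A dependence among the `θ^{(m,s j)}` therefore yields a
dependence among the `u_j`, hence one index `j₀` with `θ^{(m',s j₀)}` in the span of the other
`θ^{(m',s j)}` for every parity node `m'`. Reading block `s j₀` then puts all `α` desired components
of node `s j₀` into the span of the `α - 1` interference directions at that block, contradicting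
their independence.
-/

open Submodule

section SpanLemmas

variable {F M τ : Type*} [Field F] [AddCommGroup M] [Module F M]

theorem LinearIndependent.card_le_of_forall_mem_span_range {ι : Type*} [Fintype ι] [Fintype τ]
    {v : ι → M} (hv : LinearIndependent F v) (w : τ → M) (h : ∀ i, v i ∈ span F (Set.range w)) :
    Fintype.card ι ≤ Fintype.card τ := by
  classical
  calc Fintype.card ι ≤ Fintype.card (Set.range w) :=
        linearIndependent_le_span_aux' v hv _ (Set.range_subset_iff.mpr h)
    _ ≤ Fintype.card τ := Fintype.card_range_le w

theorem span_singleton_eq_of_mem_of_ne_zero {x u : M} (hxu : x ∈ F ∙ u) (hx : x ≠ 0) :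
    (F ∙ x) = F ∙ u := by
  obtain ⟨c, rfl⟩ := mem_span_singleton.mp hxu
  exact span_singleton_smul_eq (IsUnit.mk0 c (left_ne_zero_of_smul hx)) u

theorem span_image_le_of_span_singleton_le {x u : τ → M} (h : ∀ j, (F ∙ x j) ≤ F ∙ u j)
    (S : Set τ) : span F (x '' S) ≤ span F (u '' S) := by
  refine span_le.mpr (Set.image_subset_iff.mpr fun j hj => ?_)
  exact span_singleton_le_iff_mem _ _ |>.mp
    ((h j).trans (span_mono (Set.singleton_subset_iff.mpr (Set.mem_image_of_mem u hj))))

theorem mem_span_image_iff_of_span_singleton_eq {x u : τ → M} (h : ∀ j, (F ∙ x j) = F ∙ u j)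
    (j₀ : τ) (S : Set τ) : x j₀ ∈ span F (x '' S) ↔ u j₀ ∈ span F (u '' S) := by
  rw [← span_singleton_le_iff_mem, ← span_singleton_le_iff_mem, h,
    le_antisymm (span_image_le_of_span_singleton_le (fun j => (h j).le) S)
      (span_image_le_of_span_singleton_le (fun j => (h j).ge) S)]

end SpanLemmas

namespace RepairVectors

variable {F V W ι κ : Type*} [Field F] [AddCommGroup V] [Module F V] [AddCommGroup W] [Module F W]
  {A : ι → κ → V →ₗ[F] W} {θ : ι → κ → V}

theorem exists_forall_span_singleton_eq (hA : ∀ m i, Function.Injective (A m i))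
    (hdesired : ∀ ℓ, LinearIndependent F (fun m => A m ℓ (θ m ℓ)))
    {ℓ i : κ} (hu : ∃ u : W, ∀ m, A m i (θ m ℓ) ∈ F ∙ u) :
    ∃ u : W, ∀ m, (F ∙ A m i (θ m ℓ)) = F ∙ u := by
  obtain ⟨u, hu⟩ := hu
  refine ⟨u, fun m => span_singleton_eq_of_mem_of_ne_zero (hu m) ?_⟩
  have hθ : θ m ℓ ≠ 0 := fun h => (hdesired ℓ).ne_zero m (by simp [h])
  exact (map_ne_zero_iff _ (hA m i)).mpr hθ

theorem exists_forall_mem_span_image_of_not_linearIndependent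
    (hA : ∀ m i, Function.Injective (A m i))
    (hdesired : ∀ ℓ, LinearIndependent F (fun m => A m ℓ (θ m ℓ)))
    (halign : ∀ ℓ i, i ≠ ℓ → ∃ u : W, ∀ m, A m i (θ m ℓ) ∈ F ∙ u)
    {τ : Type*} {s : τ → κ} {i : κ} (hi : ∀ j, s j ≠ i) {m : ι}
    (hdep : ¬ LinearIndependent F (θ m ∘ s)) :
    ∃ j₀, ∀ m', θ m' (s j₀) ∈ span F ((θ m' ∘ s) '' (Set.univ \ {j₀})) := by
  choose u hu using fun j =>
    exists_forall_span_singleton_eq hA hdesired (halign (s j) i (hi j).symm)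
  have hblock_dep : ¬ LinearIndependent F (A m i ∘ θ m ∘ s) :=
    fun h => hdep (h.of_comp (A m i))
  obtain ⟨j₀, hj₀⟩ : ∃ j₀, u j₀ ∈ span F (u '' (Set.univ \ {j₀})) := by
    simpa [linearIndependent_iff_notMem_span,
      mem_span_image_iff_of_span_singleton_eq (fun j => hu j m)] using hblock_dep
  refine ⟨j₀, fun m' => ?_⟩
  have hmem : A m' i (θ m' (s j₀)) ∈ span F ((A m' i ∘ θ m' ∘ s) '' (Set.univ \ {j₀})) :=
    (mem_span_image_iff_of_span_singleton_eq (x := A m' i ∘ θ m' ∘ s)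
      (fun j => hu j m') j₀ _).mpr hj₀
  rw [Set.image_comp, ← map_span, mem_map] at hmem
  obtain ⟨y, hy, hyθ⟩ := hmem
  exact hA m' i hyθ ▸ hy

theorem not_forall_mem_span_image [Fintype ι]
    (halign : ∀ ℓ i, i ≠ ℓ → ∃ u : W, ∀ m, A m i (θ m ℓ) ∈ F ∙ u)
    (hdesired : ∀ ℓ, LinearIndependent F (fun m => A m ℓ (θ m ℓ)))
    {s : ι → κ} (hs : Function.Injective s) (j₀ : ι) :
    ¬ ∀ m, θ m (s j₀) ∈ span F ((θ m ∘ s) '' (Set.univ \ {j₀})) := by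
  classical
  intro hmem
  choose u hu using fun (j : {j // j ≠ j₀}) => halign (s j) (s j₀) (hs.ne j.2.symm)
  have hdesired_mem : ∀ m, A m (s j₀) (θ m (s j₀)) ∈ span F (Set.range u) := by
    intro m
    have h := mem_map_of_mem (f := A m (s j₀)) (hmem m)
    rw [map_span, ← Set.image_comp] at h
    refine span_le.mpr ?_ h
    rintro _ ⟨j, hj, rfl⟩
    exact span_mono (Set.singleton_subset_iff.mpr (Set.mem_range_self _)) (hu ⟨j, hj.2⟩ m)
  have hcard := (hdesired (s j₀)).card_le_of_forall_mem_span_range u hdesired_mem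
  exact hcard.not_gt (Fintype.card_subtype_lt (p := (· ≠ j₀)) (not_not.mpr rfl))

theorem linearIndependent_comp_of_forall_ne [Fintype ι] (hA : ∀ m i, Function.Injective (A m i))
    (hdesired : ∀ ℓ, LinearIndependent F (fun m => A m ℓ (θ m ℓ)))
    (halign : ∀ ℓ i, i ≠ ℓ → ∃ u : W, ∀ m, A m i (θ m ℓ) ∈ F ∙ u)
    {s : ι → κ} (hs : Function.Injective s) {i : κ} (hi : ∀ j, s j ≠ i) (m : ι) :
    LinearIndependent F (θ m ∘ s) := by
  by_contra hdep
  obtain ⟨j₀, hj₀⟩ :=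
    exists_forall_mem_span_image_of_not_linearIndependent hA hdesired halign hi hdep
  exact not_forall_mem_span_image halign hdesired hs j₀ hj₀

end RepairVectors

open RepairVectors in
theorem repair_vectors_mds_general
    {F : Type*} [Field F] {k α : ℕ} (hαk : α < k)
    (G : Fin α → Matrix (Fin k × Fin α) (Fin α) F)
    (hblk : ∀ (m : Fin α) (i : Fin k),
      IsUnit (Matrix.of (fun a j => G m (i, a) j) : Matrix (Fin α) (Fin α) F))
    (γ : Fin α → Fin k → (Fin k × Fin α → F))
    (hcol : ∀ m ℓ, ∃ θ : Fin α → F, γ m ℓ = (G m).mulVec θ)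
    (hdesired : ∀ ℓ : Fin k,
      LinearIndependent F (fun m : Fin α => fun a => γ m ℓ (ℓ, a)))
    (halign : ∀ ℓ i : Fin k, i ≠ ℓ → ∃ u : Fin α → F, ∀ m : Fin α, ∃ c : F,
      (fun a => γ m ℓ (i, a)) = c • u) :
    ∀ m : Fin α, ∀ s : Fin α → Fin k, Function.Injective s →
      LinearIndependent F (fun j : Fin α => γ m (s j)) := by
  intro m s hs
  choose θ hθ using hcol
  let A m i := (Matrix.of fun a j => G m (i, a) j).mulVecLin
  have hblock : ∀ m ℓ i, LinearMap.funLeft F F (Prod.mk i) (γ m ℓ) = A m i (θ m ℓ) := by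
    intro m ℓ i
    rw [hθ m ℓ]
    rfl
  have hA : ∀ m i, Function.Injective (A m i) :=
    fun m i => Matrix.mulVec_injective_iff_isUnit.mpr (hblk m i)
  obtain ⟨i, hi⟩ : ∃ i, ∀ j, s j ≠ i := by
    by_contra! hsurj
    have hkα := Fintype.card_le_of_surjective s hsurj
    simp only [Fintype.card_fin] at hkα
    omega
  have hdesired' : ∀ ℓ, LinearIndependent F (fun m => A m ℓ (θ m ℓ)) := fun ℓ => by
    simp only [← hblock]
    exact hdesired ℓ
  have halign' : ∀ ℓ i, i ≠ ℓ → ∃ u, ∀ m, A m i (θ m ℓ) ∈ F ∙ u := fun ℓ i h => by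
    obtain ⟨u, hu⟩ := halign ℓ i h
    refine ⟨u, fun m => mem_span_singleton.mpr ?_⟩
    obtain ⟨c, hc⟩ := hu m
    exact ⟨c, by rw [← hblock]; exact hc.symm⟩
  have hθs := linearIndependent_comp_of_forall_ne hA hdesired' halign' hs hi m
  refine LinearIndependent.of_comp (LinearMap.funLeft F F (Prod.mk i)) ?_
  simpa only [Function.comp_def, hblock] using hθs.map' (A m i) (LinearMap.ker_eq_bot.mpr (hA m i))

/-- Property 3: for `d < 2k - 1` (so `k > α`), every `α`-subset of the `k` repair
vectors passed by a parity node is linearly independent. -/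
theorem repair_vectors_mds
    {F : Type*} [Field F] [Fintype F] {k α : ℕ} (hαk : α < k)
    (G : Fin α → Matrix (Fin k × Fin α) (Fin α) F)
    (hblk : ∀ (m : Fin α) (i : Fin k),
      IsUnit (Matrix.of (fun a j => G m (i, a) j) : Matrix (Fin α) (Fin α) F))
    (γ : Fin α → Fin k → (Fin k × Fin α → F))
    (hcol : ∀ m ℓ, ∃ θ : Fin α → F, γ m ℓ = (G m).mulVec θ)
    (hdesired : ∀ ℓ : Fin k,
      LinearIndependent F (fun m : Fin α => fun a => γ m ℓ (ℓ, a)))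
    (halign : ∀ ℓ i : Fin k, i ≠ ℓ → ∃ u : Fin α → F, ∀ m : Fin α, ∃ c : F,
      (fun a => γ m ℓ (i, a)) = c • u) :
    ∀ m : Fin α, ∀ s : Fin α → Fin k, Function.Injective s →
      LinearIndependent F (fun j : Fin α => γ m (s j)) :=
  repair_vectors_mds_general hαk G hblk γ hcol hdesired halign
end

section
/- In the d = k+1 code, node repair is possible: let p_1,...,p_{k+1}, p_f ∈ F_q^k be such that every k of them are linearly independent, and let r_1,...,r_{k+1} ∈ F_q^k be arbitrary. Then there exist scalars λ_1,...,λ_{k+1} ∈ F_q and vectors ρ, δ ∈ F_q^{k+1} and a vector r̃_f ∈ F_q^k such that, with c_i = λ_i(p_iᵀu_1) + (p_iᵀu_2 + r_iᵀu_1) for i = 1,...,k+1 and for all u_1, u_2 ∈ F_q^k: Σ ρ_i c_i = p_fᵀu_1 and Σ δ_i c_i = p_fᵀu_2 + r̃_fᵀu_1. -/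
open scoped Matrix

/-!
The helper vectors `p_1, …, p_{k+1}` form a circuit in `F^k`: they span it, and their linear
dependence `∑ ρ_i p_i = 0` has all `ρ_i ≠ 0`. The combination `∑ ρ_i c_i` therefore
cancels every `p_iᵀu₂` and leaves `(∑ ρ_i λ_i p_i + ∑ ρ_i r_i)ᵀu₁`; since the `p_i` span and the
`ρ_i` are invertible, the `λ_i` can be chosen to make this `p_fᵀu₁`. The second symbol is
obtained from any `δ` with `∑ δ_i p_i = p_f`, the remaining `u₁`-part being `r̃_f`.
-/

open Submodule

section Circuit

variable {K V : Type*} [Field K] [AddCommGroup V] [Module K V] {n : ℕ} {v : Fin (n + 1) → V}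

theorem span_range_eq_top_of_linearIndependent_succAbove [FiniteDimensional K V]
    (hn : Module.finrank K V = n) (j : Fin (n + 1)) (hv : LinearIndependent K (v ∘ j.succAbove)) :
    span K (Set.range v) = ⊤ := by
  refine eq_top_iff.mpr ?_
  calc ⊤ = span K (Set.range (v ∘ j.succAbove)) :=
        (hv.span_eq_top_of_card_eq_finrank' (by simp [hn])).symm
    _ ≤ span K (Set.range v) := span_mono (Set.range_comp_subset_range _ _)

theorem not_linearIndependent_of_finrank_eq [FiniteDimensional K V]
    (hn : Module.finrank K V = n) :
    ¬ LinearIndependent K v := fun hv => by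
  have := hv.fintype_card_le_finrank
  simp [hn] at this

theorem exists_sum_smul_eq_zero_forall_ne_zero (hdep : ¬ LinearIndependent K v)
    (hv : ∀ j : Fin (n + 1), LinearIndependent K (v ∘ j.succAbove)) :
    ∃ ρ : Fin (n + 1) → K, ∑ i, ρ i • v i = 0 ∧ ∀ i, ρ i ≠ 0 := by
  obtain ⟨ρ, hρ, j₀, hj₀⟩ := Fintype.not_linearIndependent_iff.mp hdep
  refine ⟨ρ, hρ, fun j hj => hj₀ ?_⟩
  have hrest : ∑ i, (ρ ∘ j.succAbove) i • (v ∘ j.succAbove) i = 0 := by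
    rwa [Fin.sum_univ_succAbove _ j, hj, zero_smul, zero_add] at hρ
  have hzero := Fintype.linearIndependent_iff.mp (hv j) _ hrest
  rcases eq_or_ne j₀ j with rfl | hne
  · exact hj
  · obtain ⟨i, rfl⟩ := Fin.exists_succAbove_eq hne
    exact hzero i

end Circuit

theorem exists_sum_mul_smul_eq {K V ι : Type*} [Field K] [AddCommGroup V] [Module K V]
    [Fintype ι] {v : ι → V} (hv : span K (Set.range v) = ⊤) {ρ : ι → K} (hρ : ∀ i, ρ i ≠ 0)
    (w : V) : ∃ lam : ι → K, ∑ i, (ρ i * lam i) • v i = w := by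
  obtain ⟨a, ha⟩ := (mem_span_range_iff_exists_fun K).mp (hv ▸ mem_top : w ∈ span K _)
  exact ⟨fun i => a i / ρ i, by simpa only [mul_div_cancel₀ _ (hρ _)] using ha⟩

theorem sum_mul_repair_symbol {R ι κ : Type*} [CommSemiring R] [Fintype ι] [Fintype κ]
    (c lam : ι → R) (p r : ι → κ → R) (u₁ u₂ : κ → R) :
    ∑ i, c i * (lam i * (p i ⬝ᵥ u₁) + (p i ⬝ᵥ u₂ + r i ⬝ᵥ u₁))
      = (∑ i, (c i * lam i) • p i + ∑ i, c i • r i) ⬝ᵥ u₁ + (∑ i, c i • p i) ⬝ᵥ u₂ := by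
  simp only [add_dotProduct, sum_dotProduct, smul_dotProduct, smul_eq_mul,
    ← Finset.sum_add_distrib]
  exact Finset.sum_congr rfl fun i _ => by ring

theorem exists_repair {F ι κ : Type*} [Field F] [Fintype ι] [Fintype κ] {p : ι → κ → F}
    (r : ι → κ → F) (pf : κ → F) (hspan : span F (Set.range p) = ⊤) {ρ : ι → F}
    (hρ : ∑ i, ρ i • p i = 0) (hρ₀ : ∀ i, ρ i ≠ 0) :
    ∃ (lam δ : ι → F) (rt : κ → F), ∀ u₁ u₂ : κ → F,
      (∑ i, ρ i * (lam i * (p i ⬝ᵥ u₁) + (p i ⬝ᵥ u₂ + r i ⬝ᵥ u₁)) = pf ⬝ᵥ u₁) ∧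
      (∑ i, δ i * (lam i * (p i ⬝ᵥ u₁) + (p i ⬝ᵥ u₂ + r i ⬝ᵥ u₁)) = pf ⬝ᵥ u₂ + rt ⬝ᵥ u₁) := by
  obtain ⟨lam, hlam⟩ := exists_sum_mul_smul_eq hspan hρ₀ (pf - ∑ i, ρ i • r i)
  obtain ⟨δ, hδ⟩ := (mem_span_range_iff_exists_fun F).mp (hspan ▸ mem_top : pf ∈ span F _)
  refine ⟨lam, δ, ∑ i, (δ i * lam i) • p i + ∑ i, δ i • r i, fun u₁ u₂ => ⟨?_, ?_⟩⟩
  · rw [sum_mul_repair_symbol, hlam, hρ, sub_add_cancel, zero_dotProduct, add_zero]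
  · rw [sum_mul_repair_symbol, hδ, add_comm]

/-- `p_1, …, p_{k+1}` are `P 0, …, P k` and `p_f` is `P (Fin.last (k + 1))`. -/
theorem dkp1_repair_general
    {F : Type*} [Field F] {k : ℕ}
    (P : Fin (k + 2) → (Fin k → F))
    (r : Fin (k + 1) → (Fin k → F))
    (hP : ∀ s : Fin k → Fin (k + 2), Function.Injective s →
      LinearIndependent F (P ∘ s)) :
    ∃ (lam ρ δ : Fin (k + 1) → F) (rt : Fin k → F),
      ∀ u₁ u₂ : Fin k → F,
        (∑ i : Fin (k + 1),
            ρ i * (lam i * (P i.castSucc ⬝ᵥ u₁) + (P i.castSucc ⬝ᵥ u₂ + r i ⬝ᵥ u₁))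
          = P (Fin.last (k + 1)) ⬝ᵥ u₁) ∧
        (∑ i : Fin (k + 1),
            δ i * (lam i * (P i.castSucc ⬝ᵥ u₁) + (P i.castSucc ⬝ᵥ u₂ + r i ⬝ᵥ u₁))
          = P (Fin.last (k + 1)) ⬝ᵥ u₂ + rt ⬝ᵥ u₁) := by
  set p : Fin (k + 1) → Fin k → F := fun i => P i.castSucc
  have hrank : Module.finrank F (Fin k → F) = k := Module.finrank_fin_fun F
  have hdel : ∀ j : Fin (k + 1), LinearIndependent F (p ∘ j.succAbove) := fun j =>
    hP _ ((Fin.castSucc_injective _).comp Fin.succAbove_right_injective)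
  obtain ⟨ρ, hρ, hρ₀⟩ :=
    exists_sum_smul_eq_zero_forall_ne_zero (not_linearIndependent_of_finrank_eq hrank) hdel
  obtain ⟨lam, δ, rt, h⟩ := exists_repair r (P (Fin.last (k + 1)))
    (span_range_eq_top_of_linearIndependent_succAbove hrank 0 (hdel 0)) hρ hρ₀
  exact ⟨lam, ρ, δ, rt, h⟩

/-- Node repair in the `d = k + 1` code: with `p_1, …, p_{k+1}, p_f` (encoded as
`P 0, …, P k, P (last)`) such that every `k` of them are linearly independent, there
are repair coefficients `λ_i` and combination vectors `ρ, δ` recovering the exact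
component `p_fᵀu₁` and the second symbol up to an auxiliary part `r̃_fᵀu₁`. -/
theorem dkp1_repair
    {F : Type*} [Field F] [Fintype F] {k : ℕ}
    (P : Fin (k + 2) → (Fin k → F))
    (r : Fin (k + 1) → (Fin k → F))
    (hP : ∀ s : Fin k → Fin (k + 2), Function.Injective s →
      LinearIndependent F (P ∘ s)) :
    ∃ (lam ρ δ : Fin (k + 1) → F) (rt : Fin k → F),
      ∀ u₁ u₂ : Fin k → F,
        (∑ i : Fin (k + 1),
            ρ i * (lam i * (P i.castSucc ⬝ᵥ u₁) + (P i.castSucc ⬝ᵥ u₂ + r i ⬝ᵥ u₁))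
          = P (Fin.last (k + 1)) ⬝ᵥ u₁) ∧
        (∑ i : Fin (k + 1),
            δ i * (lam i * (P i.castSucc ⬝ᵥ u₁) + (P i.castSucc ⬝ᵥ u₂ + r i ⬝ᵥ u₁))
          = P (Fin.last (k + 1)) ⬝ᵥ u₂ + rt ⬝ᵥ u₁) :=
  dkp1_repair_general P r hP
end
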